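/- Let M be a real symmetric positive definite block matrix M = [[A, B], [Bᵀ, C]], where A is p×p, C is q×q, and B is p×q. Then A and the Schur complement C − BᵀA⁻¹B are positive definite, and for every index r, ((C − BᵀA⁻¹B)⁻¹)_{rr} ≥ 1 / C_{rr}. -/

import Mathlib

/-!
Both blocks inherit positive definiteness: `A` is a principal submatrix of `M`, the Schur
complement `S = C − Bᵀ A⁻¹ B` is positive semidefinite by the classical block criterion, and
`det M = det A · det S ≠ 0` makes it definite. Since `Bᵀ A⁻¹ B` is positive semidefinite,
`0 < S_rr ≤ C_rr`. Finally, `[[S, 1], [1, S⁻¹]]` is positive semidefinite (its Schur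
complement vanishes), so its `2 × 2` principal minor at `(r, r)` gives `S_rr (S⁻¹)_rr ≥ 1`.
-/

open Matrix
open scoped ComplexOrder

namespace Matrix.PosDef

variable {m n 𝕜 : Type*} [RCLike 𝕜]

theorem toBlocks₁₁ {M : Matrix (m ⊕ n) (m ⊕ n) 𝕜} (hM : M.PosDef) : M.toBlocks₁₁.PosDef :=
  hM.submatrix Sum.inl_injective

theorem schur_complement₁₁ [Fintype m] [Fintype n] [DecidableEq m] [DecidableEq n]
    {A : Matrix m m 𝕜} {B : Matrix m n 𝕜} {D : Matrix n n 𝕜}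
    (hM : (fromBlocks A B Bᴴ D).PosDef) : (D - Bᴴ * A⁻¹ * B).PosDef := by
  have hA : A.PosDef := by simpa using hM.toBlocks₁₁
  let := hA.isUnit.invertible
  have hdet : (fromBlocks A B Bᴴ D).det = A.det * (D - Bᴴ * A⁻¹ * B).det := by
    rw [det_fromBlocks₁₁, invOf_eq_nonsing_inv]
  refine ((hA.fromBlocks₁₁ B D).mp hM.posSemidef).posDef_iff_det_ne_zero.mpr fun h ↦ ?_
  exact hM.det_pos.ne' (by rw [hdet, h, mul_zero])

theorem one_le_mul_inv_apply_self [Fintype n] [DecidableEq n]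
    {S : Matrix n n ℝ} (hS : S.PosDef) (i : n) : 1 ≤ S i i * S⁻¹ i i := by
  let := hS.isUnit.invertible
  have hblock : (fromBlocks S 1 1 S⁻¹).PosSemidef := by
    simpa using (hS.fromBlocks₁₁ (1 : Matrix n n ℝ) S⁻¹).mpr (by simpa using PosSemidef.zero)
  have hminor := (hblock.submatrix ![Sum.inl i, Sum.inr i]).det_nonneg
  rw [det_fin_two] at hminor
  simpa [sub_nonneg] using hminor

theorem one_div_apply_self_le_inv_apply_self [Fintype n] [DecidableEq n]
    {S : Matrix n n ℝ} (hS : S.PosDef) (i : n) : 1 / S i i ≤ S⁻¹ i i :=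
  (div_le_iff₀' hS.diag_pos).mpr (hS.one_le_mul_inv_apply_self i)

end Matrix.PosDef

/-- For a real symmetric positive definite block matrix `M = [[A, B], [Bᵀ, C]]`,
the block `A` and the Schur complement `C − Bᵀ A⁻¹ B` are positive definite, and every
diagonal entry of the inverse Schur complement satisfies
`((C − Bᵀ A⁻¹ B)⁻¹)_{rr} ≥ 1 / C_{rr}`. -/
theorem schur_complement_inv_diag_ge {p q : ℕ}
    (A : Matrix (Fin p) (Fin p) ℝ) (B : Matrix (Fin p) (Fin q) ℝ)
    (C : Matrix (Fin q) (Fin q) ℝ)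
    (hM : (Matrix.fromBlocks A B Bᵀ C).PosDef) :
    A.PosDef ∧ (C - Bᵀ * A⁻¹ * B).PosDef ∧
      ∀ r : Fin q, 1 / C r r ≤ (C - Bᵀ * A⁻¹ * B)⁻¹ r r := by
  have hA : A.PosDef := by simpa using hM.toBlocks₁₁
  have hS : (C - Bᵀ * A⁻¹ * B).PosDef := PosDef.schur_complement₁₁ hM
  refine ⟨hA, hS, fun r ↦ ?_⟩
  have hdiag : (C - Bᵀ * A⁻¹ * B) r r ≤ C r r := by
    simpa using (hA.inv.posSemidef.conjTranspose_mul_mul_same B).diag_nonneg (i := r)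
  calc 1 / C r r ≤ 1 / (C - Bᵀ * A⁻¹ * B) r r := one_div_le_one_div_of_le hS.diag_pos hdiag
    _ ≤ (C - Bᵀ * A⁻¹ * B)⁻¹ r r := hS.one_div_apply_self_le_inv_apply_self r
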